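/- arXiv:2602.11178 — 3 statements merged into one kernel-verified Lean document; each statement's English description precedes it below -/
import Mathlib

section
/- Let X be a topological space. For every continuous map χ : X → V, the fibers χ⁻¹({L}) and χ⁻¹({R}) are disjoint closed subsets of X; conversely, for every pair of disjoint closed subsets s, t of X there exists a continuous map χ : X → V with χ⁻¹({L}) = s and χ⁻¹({R}) = t. -/
open unitInterval

/-- The interval with doubled endpoints: `[0,1]` together with extra points
`0' = Sum.inr false` and `1' = Sum.inr true`, with `0 ⤳ 0'` and `1 ⤳ 1'`. -/
def I01 : Type := unitInterval ⊕ Bool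

instance : TopologicalSpace I01 where
  IsOpen U := IsOpen (Sum.inl ⁻¹' U : Set unitInterval) ∧
    (Sum.inr false ∈ U → Sum.inl (0 : unitInterval) ∈ U) ∧
    (Sum.inr true ∈ U → Sum.inl (1 : unitInterval) ∈ U)
  isOpen_univ := ⟨isOpen_univ, fun _ => trivial, fun _ => trivial⟩
  isOpen_inter U V hU hV := ⟨hU.1.inter hV.1,
    fun h => ⟨hU.2.1 h.1, hV.2.1 h.2⟩, fun h => ⟨hU.2.2 h.1, hV.2.2 h.2⟩⟩
  isOpen_sUnion S hS := by
    refine ⟨?_, ?_, ?_⟩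
    · convert isOpen_biUnion fun U hU => (hS U hU).1 using 1
      ext x
      constructor
      · rintro ⟨U, hU, hx⟩
        exact Set.mem_biUnion hU hx
      · intro h
        simp only [Set.mem_iUnion] at h
        obtain ⟨U, hU, hx⟩ := h
        exact ⟨U, hU, hx⟩
    · rintro ⟨U, hU, hmem⟩
      exact ⟨U, hU, (hS U hU).2.1 hmem⟩
    · rintro ⟨U, hU, hmem⟩
      exact ⟨U, hU, (hS U hU).2.2 hmem⟩

/-- The three-point space with an open point `c` and two closed points `L`, `R`. -/
inductive V : Type
  | L | c | R

instance : TopologicalSpace V where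
  IsOpen U := (V.L ∈ U → V.c ∈ U) ∧ (V.R ∈ U → V.c ∈ U)
  isOpen_univ := ⟨fun _ => trivial, fun _ => trivial⟩
  isOpen_inter U W hU hW := ⟨fun h => ⟨hU.1 h.1, hW.1 h.2⟩, fun h => ⟨hU.2 h.1, hW.2 h.2⟩⟩
  isOpen_sUnion S hS := by
    constructor
    · rintro ⟨U, hU, hmem⟩
      exact ⟨U, hU, (hS U hU).1 hmem⟩
    · rintro ⟨U, hU, hmem⟩
      exact ⟨U, hU, (hS U hU).2 hmem⟩

/-- The map `π : I₀¹ → V` collapsing `[0,1]` to the open point `c`. -/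
def pi1 : I01 → V
  | Sum.inl _ => V.c
  | Sum.inr false => V.L
  | Sum.inr true => V.R

/-- The map `ι : I₀¹ → [0,1]` collapsing the doubled endpoints. -/
def iota : I01 → unitInterval
  | Sum.inl x => x
  | Sum.inr false => 0
  | Sum.inr true => 1

namespace V

theorem isClosed_iff {F : Set V} : IsClosed F ↔ (V.c ∈ F → V.L ∈ F ∧ V.R ∈ F) := by
  rw [← isOpen_compl_iff]
  change (V.L ∉ F → V.c ∉ F) ∧ (V.R ∉ F → V.c ∉ F) ↔ _
  tauto

theorem isClosed_singleton_L : IsClosed {V.L} :=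
  isClosed_iff.2 nofun

theorem isClosed_singleton_R : IsClosed {V.R} :=
  isClosed_iff.2 nofun

theorem eq_univ_of_isClosed_of_c_mem {F : Set V} (hF : IsClosed F) (hc : V.c ∈ F) :
    F = Set.univ := by
  obtain ⟨hL, hR⟩ := isClosed_iff.1 hF hc
  ext v
  cases v <;> simpa

theorem continuous_iff {X : Type*} [TopologicalSpace X] {χ : X → V} :
    Continuous χ ↔ IsClosed (χ ⁻¹' {V.L}) ∧ IsClosed (χ ⁻¹' {V.R}) := by
  refine ⟨fun hχ => ⟨isClosed_singleton_L.preimage hχ, isClosed_singleton_R.preimage hχ⟩, ?_⟩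
  rintro ⟨hL, hR⟩
  refine continuous_iff_isClosed.2 fun F hF => ?_
  by_cases hc : V.c ∈ F
  · simp [eq_univ_of_isClosed_of_c_mem hF hc]
  -- A closed set missing `c` lies in `{L, R}`, so its preimage is a union of at most two fibers.
  have hsub : F ⊆ {V.L, V.R} := by
    rintro (_ | _ | _) hv <;> simp_all
  rw [← Set.biUnion_preimage_singleton]
  refine (((Set.finite_singleton _).insert _).subset hsub).isClosed_biUnion fun v hv => ?_
  rcases hsub hv with rfl | rfl <;> assumption

open Classical in
noncomputable def piecewise {X : Type*} (s t : Set X) (x : X) : V :=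
  if x ∈ s then V.L else if x ∈ t then V.R else V.c

variable {X : Type*} {s t : Set X}

theorem preimage_piecewise_L : piecewise s t ⁻¹' {V.L} = s := by
  ext x
  simp only [piecewise, Set.mem_preimage, Set.mem_singleton_iff]
  split_ifs <;> simpa

theorem preimage_piecewise_R (hst : Disjoint s t) : piecewise s t ⁻¹' {V.R} = t := by
  ext x
  simp only [piecewise, Set.mem_preimage, Set.mem_singleton_iff]
  split_ifs with hs ht
  · simpa using Set.disjoint_left.1 hst hs
  · simpa
  · simpa

theorem continuous_piecewise [TopologicalSpace X] (hs : IsClosed s) (ht : IsClosed t)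
    (hst : Disjoint s t) : Continuous (piecewise s t) :=
  continuous_iff.2 ⟨preimage_piecewise_L ▸ hs, (preimage_piecewise_R hst).symm ▸ ht⟩

end V

/-- for every continuous `χ : X → V` the fibers of `L` and `R` are disjoint
closed sets; conversely, every pair of disjoint closed sets arises this way. -/
theorem continuous_to_V_iff_disjoint_closeds (X : Type) [TopologicalSpace X] :
    (∀ χ : X → V, Continuous χ →
      IsClosed (χ ⁻¹' {V.L}) ∧ IsClosed (χ ⁻¹' {V.R}) ∧
        Disjoint (χ ⁻¹' {V.L}) (χ ⁻¹' {V.R})) ∧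
    (∀ s t : Set X, IsClosed s → IsClosed t → Disjoint s t →
      ∃ χ : X → V, Continuous χ ∧ χ ⁻¹' {V.L} = s ∧ χ ⁻¹' {V.R} = t) := by
  refine ⟨fun χ hχ => ?_, fun s t hs ht hst => ?_⟩
  · obtain ⟨hL, hR⟩ := V.continuous_iff.1 hχ
    exact ⟨hL, hR, (Set.disjoint_singleton.2 (nofun : V.L ≠ V.R)).preimage χ⟩
  · exact ⟨V.piecewise s t, V.continuous_piecewise hs ht hst, V.preimage_piecewise_L,
      V.preimage_piecewise_R hst⟩
end

section
/- Let X be a topological space. For every continuous map χ : X → W′, the fiber χ⁻¹({p}) is closed in X, and the fibers χ⁻¹({u}) and χ⁻¹({v}) are disjoint sets that are closed in the open subspace O = X \ χ⁻¹({p}); conversely, for every open subset O ⊆ X and every pair of disjoint subsets s, t ⊆ O that are closed in the subspace topology of O, there exists a continuous map χ : X → W′ with χ⁻¹({p}) = X \ O, χ⁻¹({u}) = s and χ⁻¹({v}) = t. -/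
/-- The four-point space `{u, c, v, p}`: `c` is an open point, `u` and `v` specialize to the
closed point `p`, and `c` specializes to `u` and `v`. -/
inductive Wp : Type
  | u | c | v | p

instance : TopologicalSpace Wp where
  IsOpen U := (Wp.p ∈ U → Wp.u ∈ U ∧ Wp.v ∈ U) ∧ (Wp.u ∈ U → Wp.c ∈ U) ∧
    (Wp.v ∈ U → Wp.c ∈ U)
  isOpen_univ := ⟨fun _ => ⟨trivial, trivial⟩, fun _ => trivial, fun _ => trivial⟩
  isOpen_inter U W hU hW :=
    ⟨fun h => ⟨⟨(hU.1 h.1).1, (hW.1 h.2).1⟩, ⟨(hU.1 h.1).2, (hW.1 h.2).2⟩⟩,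
     fun h => ⟨hU.2.1 h.1, hW.2.1 h.2⟩, fun h => ⟨hU.2.2 h.1, hW.2.2 h.2⟩⟩
  isOpen_sUnion S hS := by
    refine ⟨?_, ?_, ?_⟩
    · rintro ⟨U, hU, hmem⟩
      exact ⟨⟨U, hU, ((hS U hU).1 hmem).1⟩, ⟨U, hU, ((hS U hU).1 hmem).2⟩⟩
    · rintro ⟨U, hU, hmem⟩
      exact ⟨U, hU, (hS U hU).2.1 hmem⟩
    · rintro ⟨U, hU, hmem⟩
      exact ⟨U, hU, (hS U hU).2.2 hmem⟩

lemma Wp.isClosed_p : IsClosed ({Wp.p} : Set Wp) := by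
  rw [← isOpen_compl_iff]
  refine ⟨fun h => absurd rfl h, fun _ => ?_, fun _ => ?_⟩ <;> simp

lemma Wp.isClosed_up : IsClosed ({Wp.u, Wp.p} : Set Wp) := by
  rw [← isOpen_compl_iff]
  refine ⟨fun h => absurd (Or.inr rfl) h, fun h => absurd (Or.inl rfl) h, fun _ => ?_⟩
  simp

lemma Wp.isClosed_vp : IsClosed ({Wp.v, Wp.p} : Set Wp) := by
  rw [← isOpen_compl_iff]
  refine ⟨fun h => absurd (Or.inr rfl) h, fun _ => ?_, fun h => absurd (Or.inl rfl) h⟩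
  simp

/-- for every continuous `χ : X → W′` the fiber of `p` is closed in `X`, and
the fibers of `u` and `v` are disjoint sets closed in the open subspace
`O = X \ χ⁻¹({p})`; conversely, every open `O ⊆ X` and disjoint sets `s, t ⊆ O` closed in
the subspace topology of `O` arise this way. -/
theorem continuous_to_Wp_iff (X : Type) [TopologicalSpace X] :
    (∀ χ : X → Wp, Continuous χ →
      IsClosed (χ ⁻¹' {Wp.p}) ∧
      Disjoint (χ ⁻¹' {Wp.u}) (χ ⁻¹' {Wp.v}) ∧
      IsClosed (Subtype.val ⁻¹' (χ ⁻¹' {Wp.u}) : Set ↥((χ ⁻¹' {Wp.p})ᶜ)) ∧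
      IsClosed (Subtype.val ⁻¹' (χ ⁻¹' {Wp.v}) : Set ↥((χ ⁻¹' {Wp.p})ᶜ))) ∧
    (∀ O : Set X, IsOpen O → ∀ s t : Set X, s ⊆ O → t ⊆ O → Disjoint s t →
      IsClosed (Subtype.val ⁻¹' s : Set ↥O) → IsClosed (Subtype.val ⁻¹' t : Set ↥O) →
      ∃ χ : X → Wp, Continuous χ ∧
        χ ⁻¹' {Wp.p} = Oᶜ ∧ χ ⁻¹' {Wp.u} = s ∧ χ ⁻¹' {Wp.v} = t) := by
  constructor
  · intro χ hχ
    refine ⟨Wp.isClosed_p.preimage hχ, ?_, ?_, ?_⟩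
    · rw [Set.disjoint_left]
      intro x hx hx'
      simp only [Set.mem_preimage, Set.mem_singleton_iff] at hx hx'
      exact Wp.noConfusion (hx ▸ hx')
    · have : (Subtype.val ⁻¹' (χ ⁻¹' {Wp.u}) : Set ↥((χ ⁻¹' {Wp.p})ᶜ)) =
          (fun x : ↥((χ ⁻¹' {Wp.p})ᶜ) => χ x.val) ⁻¹' {Wp.u, Wp.p} := by
        ext ⟨x, hx⟩
        simp only [Set.mem_preimage, Set.mem_singleton_iff, Set.mem_insert_iff]
        have hxp : χ x ≠ Wp.p := hx
        exact ⟨Or.inl, fun h => h.resolve_right hxp⟩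
      rw [this]
      exact Wp.isClosed_up.preimage (hχ.comp continuous_subtype_val)
    · have : (Subtype.val ⁻¹' (χ ⁻¹' {Wp.v}) : Set ↥((χ ⁻¹' {Wp.p})ᶜ)) =
          (fun x : ↥((χ ⁻¹' {Wp.p})ᶜ) => χ x.val) ⁻¹' {Wp.v, Wp.p} := by
        ext ⟨x, hx⟩
        simp only [Set.mem_preimage, Set.mem_singleton_iff, Set.mem_insert_iff]
        have hxp : χ x ≠ Wp.p := hx
        exact ⟨Or.inl, fun h => h.resolve_right hxp⟩
      rw [this]
      exact Wp.isClosed_vp.preimage (hχ.comp continuous_subtype_val)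
  · intro O hO s t hsO htO hdisj hs ht
    classical
    obtain ⟨C, hC, hCs⟩ := isClosed_induced_iff.mp hs
    obtain ⟨D, hD, hDt⟩ := isClosed_induced_iff.mp ht
    have hsC : ∀ x, x ∈ O → (x ∈ s ↔ x ∈ C) := by
      intro x hx
      have := congrArg (fun S => (⟨x, hx⟩ : ↥O) ∈ S) hCs
      simpa [Set.mem_preimage] using this.symm
    have htD : ∀ x, x ∈ O → (x ∈ t ↔ x ∈ D) := by
      intro x hx
      have := congrArg (fun S => (⟨x, hx⟩ : ↥O) ∈ S) hDt
      simpa [Set.mem_preimage] using this.symm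
    refine ⟨fun x => if x ∈ s then Wp.u else if x ∈ t then Wp.v else if x ∈ O then Wp.c
      else Wp.p, ?_, ?_, ?_, ?_⟩
    · rw [continuous_def]
      intro U hU
      obtain ⟨h1, h2, h3⟩ := hU
      by_cases hp : Wp.p ∈ U
      · have hu := (h1 hp).1
        have hv := (h1 hp).2
        have hc := h2 hu
        have : (fun x => if x ∈ s then Wp.u else if x ∈ t then Wp.v else if x ∈ O then Wp.c
            else Wp.p) ⁻¹' U = Set.univ := by
          ext x
          simp only [Set.mem_preimage, Set.mem_univ, iff_true]
          split_ifs <;> assumption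
        rw [this]; exact isOpen_univ
      by_cases hc : Wp.c ∈ U
      · by_cases hu : Wp.u ∈ U <;> by_cases hv : Wp.v ∈ U
        · have : (fun x => if x ∈ s then Wp.u else if x ∈ t then Wp.v else if x ∈ O then Wp.c
              else Wp.p) ⁻¹' U = O := by
            ext x
            simp only [Set.mem_preimage]
            split_ifs with h₁ h₂ h₃
            · simp [hu, hsO h₁]
            · simp [hv, htO h₂]
            · simp [hc, h₃]
            · simp [hp, h₃]
          rw [this]; exact hO
        · have : (fun x => if x ∈ s then Wp.u else if x ∈ t then Wp.v else if x ∈ O then Wp.c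
              else Wp.p) ⁻¹' U = O ∩ Dᶜ := by
            ext x
            simp only [Set.mem_preimage, Set.mem_inter_iff, Set.mem_compl_iff]
            split_ifs with h₁ h₂ h₃
            · exact iff_of_true hu ⟨hsO h₁,
                fun hD' => hdisj.le_bot ⟨h₁, (htD x (hsO h₁)).mpr hD'⟩⟩
            · exact iff_of_false hv (fun h => h.2 ((htD x h.1).mp h₂))
            · exact iff_of_true hc ⟨h₃, fun hD' => h₂ ((htD x h₃).mpr hD')⟩
            · exact iff_of_false hp (fun h => h₃ h.1)
          rw [this]; exact hO.inter hD.isOpen_compl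
        · have : (fun x => if x ∈ s then Wp.u else if x ∈ t then Wp.v else if x ∈ O then Wp.c
              else Wp.p) ⁻¹' U = O ∩ Cᶜ := by
            ext x
            simp only [Set.mem_preimage, Set.mem_inter_iff, Set.mem_compl_iff]
            split_ifs with h₁ h₂ h₃
            · exact iff_of_false hu (fun h => h.2 ((hsC x h.1).mp h₁))
            · exact iff_of_true hv ⟨htO h₂, fun hC' => h₁ ((hsC x (htO h₂)).mpr hC')⟩
            · exact iff_of_true hc ⟨h₃, fun hC' => h₁ ((hsC x h₃).mpr hC')⟩
            · exact iff_of_false hp (fun h => h₃ h.1)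
          rw [this]; exact hO.inter hC.isOpen_compl
        · have : (fun x => if x ∈ s then Wp.u else if x ∈ t then Wp.v else if x ∈ O then Wp.c
              else Wp.p) ⁻¹' U = O ∩ Cᶜ ∩ Dᶜ := by
            ext x
            simp only [Set.mem_preimage, Set.mem_inter_iff, Set.mem_compl_iff]
            split_ifs with h₁ h₂ h₃
            · exact iff_of_false hu (fun h => h.1.2 ((hsC x h.1.1).mp h₁))
            · exact iff_of_false hv (fun h => h.2 ((htD x h.1.1).mp h₂))
            · exact iff_of_true hc ⟨⟨h₃, fun hC' => h₁ ((hsC x h₃).mpr hC')⟩,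
                fun hD' => h₂ ((htD x h₃).mpr hD')⟩
            · exact iff_of_false hp (fun h => h₃ h.1.1)
          rw [this]; exact (hO.inter hC.isOpen_compl).inter hD.isOpen_compl
      · have hu : Wp.u ∉ U := fun h => hc (h2 h)
        have hv : Wp.v ∉ U := fun h => hc (h3 h)
        have : (fun x => if x ∈ s then Wp.u else if x ∈ t then Wp.v else if x ∈ O then Wp.c
            else Wp.p) ⁻¹' U = ∅ := by
          ext x
          simp only [Set.mem_preimage, Set.mem_empty_iff_false, iff_false]
          split_ifs <;> assumption
        rw [this]; exact isOpen_empty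
    · ext x
      simp only [Set.mem_preimage, Set.mem_singleton_iff, Set.mem_compl_iff]
      split_ifs with h₁ h₂ h₃
      · simp [hsO h₁]
      · simp [htO h₂]
      · simp [h₃]
      · simp [h₃]
    · ext x
      simp only [Set.mem_preimage, Set.mem_singleton_iff]
      split_ifs with h₁ h₂ h₃
      · exact iff_of_true rfl h₁
      · exact iff_of_false (by simp) h₁
      · exact iff_of_false (by simp) h₁
      · exact iff_of_false (by simp) h₁
    · ext x
      simp only [Set.mem_preimage, Set.mem_singleton_iff]
      split_ifs with h₁ h₂ h₃
      · exact iff_of_false (by simp) (fun h => hdisj.le_bot ⟨h₁, h⟩)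
      · exact iff_of_true rfl h₂
      · exact iff_of_false (by simp) h₂
      · exact iff_of_false (by simp) h₂
end

section
/- A topological space X has the property that every open subspace of X is normal (i.e. X is hereditarily normal) if and only if for every continuous map χ : X → W′ there exists a continuous map λ : X → W with π_h ∘ λ = χ. -/
/-- The six-point space `{u, u′, r, v′, v, p}`: `u′` and `v′` are open points, `u, r, v`
specialize to the closed point `p`, `u′` specializes to `u` and `r`, and `v′` specializes
to `v` and `r`. -/
inductive W : Type
  | u | u' | r | v' | v | p

instance : TopologicalSpace W where
  IsOpen U := (W.p ∈ U → W.u ∈ U ∧ W.r ∈ U ∧ W.v ∈ U) ∧ (W.u ∈ U → W.u' ∈ U) ∧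
    (W.r ∈ U → W.u' ∈ U ∧ W.v' ∈ U) ∧ (W.v ∈ U → W.v' ∈ U)
  isOpen_univ := ⟨fun _ => ⟨trivial, trivial, trivial⟩, fun _ => trivial,
    fun _ => ⟨trivial, trivial⟩, fun _ => trivial⟩
  isOpen_inter U T hU hT :=
    ⟨fun h => ⟨⟨(hU.1 h.1).1, (hT.1 h.2).1⟩, ⟨(hU.1 h.1).2.1, (hT.1 h.2).2.1⟩,
        ⟨(hU.1 h.1).2.2, (hT.1 h.2).2.2⟩⟩,
     fun h => ⟨hU.2.1 h.1, hT.2.1 h.2⟩,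
     fun h => ⟨⟨(hU.2.2.1 h.1).1, (hT.2.2.1 h.2).1⟩, ⟨(hU.2.2.1 h.1).2, (hT.2.2.1 h.2).2⟩⟩,
     fun h => ⟨hU.2.2.2 h.1, hT.2.2.2 h.2⟩⟩
  isOpen_sUnion S hS := by
    refine ⟨?_, ?_, ?_, ?_⟩
    · rintro ⟨U, hU, hmem⟩
      exact ⟨⟨U, hU, ((hS U hU).1 hmem).1⟩, ⟨U, hU, ((hS U hU).1 hmem).2.1⟩,
        ⟨U, hU, ((hS U hU).1 hmem).2.2⟩⟩
    · rintro ⟨U, hU, hmem⟩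
      exact ⟨U, hU, (hS U hU).2.1 hmem⟩
    · rintro ⟨U, hU, hmem⟩
      exact ⟨⟨U, hU, ((hS U hU).2.2.1 hmem).1⟩, ⟨U, hU, ((hS U hU).2.2.1 hmem).2⟩⟩
    · rintro ⟨U, hU, hmem⟩
      exact ⟨U, hU, (hS U hU).2.2.2 hmem⟩

/-- The map `π_h : W → W′` fixing `u`, `v`, `p` and collapsing `u′`, `r`, `v′` to the open
point `c`. -/
def piH : W → Wp
  | W.u => Wp.u
  | W.v => Wp.v
  | W.p => Wp.p
  | W.u' => Wp.c
  | W.r => Wp.c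
  | W.v' => Wp.c


/-! Hereditary normality is complete normality. For continuous `χ : X → W′` the sets `χ⁻¹{u}`
and `χ⁻¹{v}` are separated, and a lift `λ` of `χ` amounts to disjoint open neighbourhoods
`λ⁻¹{u, u′}`, `λ⁻¹{v, v′}` of them: given such `U`, `V`, send the points of `χ⁻¹{c}` to `u′` in
`U`, to `v′` in `V` and to `r` elsewhere. Every separated pair `s`, `t` arises this way, from the
map `X → W′` classifying the closed sets `closure s` and `closure t`. -/

open Set

theorem continuous_of_isOpen_preimage_minimal {X Y : Type*} [TopologicalSpace X]
    [TopologicalSpace Y] {f : X → Y} (N : Y → Set Y) (mem_N : ∀ y, y ∈ N y)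
    (N_subset : ∀ ⦃U⦄, IsOpen U → ∀ ⦃y⦄, y ∈ U → N y ⊆ U) (hf : ∀ y, IsOpen (f ⁻¹' N y)) :
    Continuous f :=
  continuous_def.2 fun _ hU => isOpen_iff_mem_nhds.2 fun x hx =>
    Filter.mem_of_superset ((hf (f x)).mem_nhds (mem_N _)) (preimage_mono (N_subset hU hx))

namespace Wp

def minimalOpen : Wp → Set Wp
  | u => {u, c}
  | c => {c}
  | v => {v, c}
  | p => univ

theorem mem_minimalOpen (w : Wp) : w ∈ minimalOpen w := by
  cases w <;> simp [minimalOpen]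

theorem isOpen_minimalOpen (w : Wp) : IsOpen (minimalOpen w) := by
  cases w <;> constructor <;> simp [minimalOpen]

theorem minimalOpen_subset {U : Set Wp} (hU : IsOpen U) {w : Wp} (hw : w ∈ U) :
    minimalOpen w ⊆ U := by
  obtain ⟨hp, hu, hv⟩ := hU
  cases w <;> simp only [minimalOpen, insert_subset_iff, singleton_subset_iff, univ_subset_iff,
    eq_univ_iff_forall] <;> (try intro w; cases w) <;> tauto

theorem continuous_of_isOpen_preimage {X : Type*} [TopologicalSpace X] {f : X → Wp}
    (hu : IsOpen (f ⁻¹' {u, c})) (hv : IsOpen (f ⁻¹' {v, c})) : Continuous f := by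
  refine continuous_of_isOpen_preimage_minimal minimalOpen mem_minimalOpen
    (fun _ hU _ => minimalOpen_subset hU) fun w => ?_
  cases w
  · exact hu
  · rw [show minimalOpen c = {u, c} ∩ {v, c} by ext w; cases w <;> simp [minimalOpen],
      preimage_inter]
    exact hu.inter hv
  · exact hv
  · exact isOpen_univ

end Wp

namespace W

def minimalOpen : W → Set W
  | u => {u, u'}
  | u' => {u'}
  | r => {u', r, v'}
  | v' => {v'}
  | v => {v, v'}
  | p => univ

theorem mem_minimalOpen (w : W) : w ∈ minimalOpen w := by
  cases w <;> simp [minimalOpen]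

theorem isOpen_minimalOpen (w : W) : IsOpen (minimalOpen w) := by
  cases w <;> constructor <;> simp [minimalOpen]

theorem minimalOpen_subset {U : Set W} (hU : IsOpen U) {w : W} (hw : w ∈ U) :
    minimalOpen w ⊆ U := by
  obtain ⟨hp, hu, hr, hv⟩ := hU
  cases w <;> simp only [minimalOpen, insert_subset_iff, singleton_subset_iff, univ_subset_iff,
    eq_univ_iff_forall] <;> (try intro w; cases w) <;> tauto

theorem continuous_of_isOpen_preimage {X : Type*} [TopologicalSpace X] {f : X → W}
    (hu : IsOpen (f ⁻¹' {u, u'})) (hv : IsOpen (f ⁻¹' {v, v'}))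
    (hr : IsOpen (f ⁻¹' {u', r, v'})) : Continuous f := by
  refine continuous_of_isOpen_preimage_minimal minimalOpen mem_minimalOpen
    (fun _ hU _ => minimalOpen_subset hU) fun w => ?_
  cases w
  · exact hu
  · rw [show minimalOpen u' = {u, u'} ∩ {u', r, v'} by ext w; cases w <;> simp [minimalOpen],
      preimage_inter]
    exact hu.inter hr
  · exact hr
  · rw [show minimalOpen v' = {v, v'} ∩ {u', r, v'} by ext w; cases w <;> simp [minimalOpen],
      preimage_inter]
    exact hv.inter hr
  · exact hv
  · exact isOpen_univ

end W

@[simp]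
theorem piH_eq_u_iff {w : W} : piH w = .u ↔ w = .u := by
  cases w <;> simp [piH]

@[simp]
theorem piH_eq_v_iff {w : W} : piH w = .v ↔ w = .v := by
  cases w <;> simp [piH]

section

variable {X : Type*}

open Classical in
noncomputable def Wp.classify (F G : Set X) (x : X) : Wp :=
  if x ∈ F then (if x ∈ G then .p else .u) else (if x ∈ G then .v else .c)

variable [TopologicalSpace X]

theorem Wp.continuous_classify {F G : Set X} (hF : IsClosed F) (hG : IsClosed G) :
    Continuous (classify F G) := by
  have mem_iff (x : X) : (classify F G x ∈ ({u, c} : Set Wp) ↔ x ∉ G) ∧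
      (classify F G x ∈ ({v, c} : Set Wp) ↔ x ∉ F) := by
    by_cases x ∈ F <;> by_cases x ∈ G <;> simp [classify, *]
  refine continuous_of_isOpen_preimage ?_ ?_
  · convert hG.isOpen_compl using 1; ext x; exact (mem_iff x).1
  · convert hF.isOpen_compl using 1; ext x; exact (mem_iff x).2

theorem completelyNormalSpace_of_forall_exists_lift
    (h : ∀ χ : X → Wp, Continuous χ → ∃ lam : X → W, Continuous lam ∧ piH ∘ lam = χ) :
    CompletelyNormalSpace X where
  completely_normal s t hst hts := by
    obtain ⟨lam, hlam, hcomp⟩ := h (Wp.classify (closure s) (closure t))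
      (Wp.continuous_classify isClosed_closure isClosed_closure)
    refine separatedNhds_iff_disjoint.1 ⟨lam ⁻¹' {.u, .u'}, lam ⁻¹' {.v, .v'},
      (W.isOpen_minimalOpen .u).preimage hlam, (W.isOpen_minimalOpen .v).preimage hlam,
      fun x hx => ?_, fun x hx => ?_, Disjoint.preimage _ (by simp)⟩
    · have : piH (lam x) = .u := (congrFun hcomp x).trans <| by
        simp [Wp.classify, subset_closure hx, hts.notMem_of_mem_left hx]
      simp_all
    · have : piH (lam x) = .v := (congrFun hcomp x).trans <| by
        simp [Wp.classify, subset_closure hx, hst.notMem_of_mem_right hx]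
      simp_all

end

section

variable {X : Type*}

open Classical in
noncomputable def liftSeparating (U V : Set X) (χ : X → Wp) (x : X) : W :=
  match χ x with
  | .u => .u
  | .v => .v
  | .p => .p
  | .c => if x ∈ U then .u' else if x ∈ V then .v' else .r

theorem piH_comp_liftSeparating (U V : Set X) (χ : X → Wp) :
    piH ∘ liftSeparating U V χ = χ := by
  funext x
  simp only [Function.comp_apply, liftSeparating]
  cases χ x <;> simp only <;> (try split_ifs) <;> rfl

variable [TopologicalSpace X]

theorem continuous_liftSeparating {U V : Set X} {χ : X → Wp} (hχ : Continuous χ)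
    (hU : IsOpen U) (hV : IsOpen V) (hUV : Disjoint U V)
    (huU : χ ⁻¹' {.u} ⊆ U) (hvV : χ ⁻¹' {.v} ⊆ V) :
    Continuous (liftSeparating U V χ) := by
  have hopen (w : Wp) : IsOpen (χ ⁻¹' Wp.minimalOpen w) := (Wp.isOpen_minimalOpen w).preimage hχ
  apply W.continuous_of_isOpen_preimage
  · convert (hopen .u).inter hU using 1
    ext x
    have hx := @huU x
    simp only [mem_preimage, mem_inter_iff, Wp.minimalOpen, liftSeparating] at hx ⊢
    cases h : χ x <;> (try split_ifs) <;> simp_all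
  · convert (hopen .v).inter hV using 1
    ext x
    have hx := @hvV x
    have hUV := hUV.notMem_of_mem_left (a := x)
    simp only [mem_preimage, mem_inter_iff, Wp.minimalOpen, liftSeparating] at hx ⊢
    cases h : χ x <;> (try split_ifs) <;> simp_all
  · convert hopen .c using 1
    ext x
    simp only [mem_preimage, Wp.minimalOpen, liftSeparating]
    cases h : χ x <;> (try split_ifs) <;> simp_all

theorem exists_lift_of_completelyNormalSpace [CompletelyNormalSpace X] {χ : X → Wp}
    (hχ : Continuous χ) : ∃ lam : X → W, Continuous lam ∧ piH ∘ lam = χ := by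
  have hu : IsOpen (χ ⁻¹' {.u, .c}) := (Wp.isOpen_minimalOpen .u).preimage hχ
  have hv : IsOpen (χ ⁻¹' {.v, .c}) := (Wp.isOpen_minimalOpen .v).preimage hχ
  have hsep₁ : Disjoint (closure (χ ⁻¹' {.u})) (χ ⁻¹' {.v}) :=
    ((Disjoint.preimage χ (by simp)).closure_left hv).mono_right (preimage_mono (by simp))
  have hsep₂ : Disjoint (χ ⁻¹' {.u}) (closure (χ ⁻¹' {.v})) :=
    ((Disjoint.preimage χ (by simp)).closure_right hu).mono_left (preimage_mono (by simp))
  obtain ⟨U, V, hU, hV, huU, hvV, hUV⟩ :=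
    separatedNhds_iff_disjoint.2 (completely_normal hsep₁ hsep₂)
  exact ⟨_, continuous_liftSeparating hχ hU hV hUV huU hvV, piH_comp_liftSeparating U V χ⟩

end

/-- every open subspace of `X` is normal (i.e. `X` is hereditarily normal)
iff every continuous `χ : X → W′` lifts through `π_h : W → W′`. -/
theorem hereditarilyNormal_iff_lifts (X : Type) [TopologicalSpace X] :
    (∀ O : Set X, IsOpen O → NormalSpace ↥O) ↔
      ∀ χ : X → Wp, Continuous χ →
        ∃ lam : X → W, Continuous lam ∧ piH ∘ lam = χ := by
  rw [← completelyNormalSpace_iff_forall_isOpen_normalSpace]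
  exact ⟨fun _ _ => exists_lift_of_completelyNormalSpace,
    completelyNormalSpace_of_forall_exists_lift⟩
end
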